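/- arXiv:0712.2480 — 2 statements merged into one kernel-verified Lean document; each statement's English description precedes it below -/
import Mathlib

section
/- Let $\{\pi_j\}_{j\ge 0}$ be a probability distribution on nonnegative integers with $\pi_0>0$ and mean $\gamma_1=\sum_j j\pi_j < 1$. Let $\{Q_k\}$ satisfy $Q_0>0$ and $Q_k=\sum_{j=0}^k \pi_j Q_{k-j+1}$. Then $\lim_{k\to\infty} Q_k = Q_0/(1-\gamma_1)$. -/
/-!
With `a n = Q (n + 1)` and the tail probabilities `ρ t = ∑_{j > t} π_j`, the recurrence becomes
the renewal equation `a n = Q 0 + ∑_{s + t = n} ρ t * a s`, whose weights have total mass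
`∑ ρ t = γ₁ < 1`. For nonnegative forcing the solution is nonnegative and nondecreasing (its
differences solve a renewal equation with nonnegative forcing), and bounded by `Q 0 / (1 - γ₁)`.
Its limit `L` satisfies `Q 0 + γ₁ L ≤ L`, which forces `L = Q 0 / (1 - γ₁)`; the case of
negative forcing follows by linearity.
-/

open Filter Finset Topology

section Renewal

variable {w a b : ℕ → ℝ} {c g L : ℝ}

theorem nonneg_of_renewal (hw : ∀ t, 0 ≤ w t) (hw0 : w 0 < 1) (hb : ∀ n, 0 ≤ b n)
    (ha : ∀ n, a n = b n + ∑ p ∈ antidiagonal n, w p.1 * a p.2) (n : ℕ) : 0 ≤ a n := by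
  induction n using Nat.strong_induction_on with
  | _ n ih =>
    cases n with
    | zero =>
      have h0 := ha 0
      simp only [Nat.antidiagonal_zero, sum_singleton] at h0
      nlinarith [hb 0]
    | succ m =>
      have hm := ha (m + 1)
      rw [Nat.sum_antidiagonal_succ] at hm
      have hrest : 0 ≤ ∑ p ∈ antidiagonal m, w (p.1 + 1) * a p.2 :=
        sum_nonneg fun p hp =>
          mul_nonneg (hw _) (ih _ (Nat.antidiagonal.snd_lt hp))
      nlinarith [hb (m + 1)]

theorem renewal_sub_succ (ha : ∀ n, a n = c + ∑ p ∈ antidiagonal n, w p.1 * a p.2) (n : ℕ) :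
    a (n + 1) - a n =
      w (n + 1) * a 0 + ∑ p ∈ antidiagonal n, w p.1 * (a (p.2 + 1) - a p.2) := by
  rw [ha (n + 1), ha n, Nat.sum_antidiagonal_succ']
  simp only [mul_sub, sum_sub_distrib]
  ring

theorem monotone_of_renewal (hw : ∀ t, 0 ≤ w t) (hw0 : w 0 < 1) (hc : 0 ≤ c)
    (ha : ∀ n, a n = c + ∑ p ∈ antidiagonal n, w p.1 * a p.2) : Monotone a := by
  have ha0 : 0 ≤ a 0 := nonneg_of_renewal (b := fun _ => c) hw hw0 (fun _ => hc) ha 0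
  refine monotone_nat_of_le_succ fun n => sub_nonneg.1 ?_
  exact nonneg_of_renewal (a := fun n => a (n + 1) - a n) (b := fun n => w (n + 1) * a 0)
    hw hw0 (fun n => mul_nonneg (hw _) ha0) (renewal_sub_succ ha) n

theorem le_div_of_renewal (hw : ∀ t, 0 ≤ w t) (hW : HasSum w g) (hg : g < 1) (hc : 0 ≤ c)
    (ha : ∀ n, a n = c + ∑ p ∈ antidiagonal n, w p.1 * a p.2) (n : ℕ) :
    a n ≤ c / (1 - g) := by
  have hw0 : w 0 < 1 := (le_hasSum hW 0 fun j _ => hw j).trans_lt hg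
  have hmono := monotone_of_renewal hw hw0 hc ha
  have hnn : 0 ≤ a n := nonneg_of_renewal (b := fun _ => c) hw hw0 (fun _ => hc) ha n
  have hconv : ∑ p ∈ antidiagonal n, w p.1 * a p.2 ≤ g * a n :=
    calc ∑ p ∈ antidiagonal n, w p.1 * a p.2
        ≤ ∑ p ∈ antidiagonal n, w p.1 * a n :=
          sum_le_sum fun p hp =>
            mul_le_mul_of_nonneg_left (hmono (HasAntidiagonal.antidiagonal.snd_le hp)) (hw _)
      _ = (∑ t ∈ range (n + 1), w t) * a n := by
          rw [sum_mul, Nat.sum_antidiagonal_eq_sum_range_succ_mk]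
      _ ≤ g * a n := mul_le_mul_of_nonneg_right (sum_le_hasSum _ (fun j _ => hw j) hW) hnn
  rw [le_div_iff₀ (sub_pos.2 hg)]
  linarith [ha n]

theorem add_mul_le_of_renewal (hw : ∀ t, 0 ≤ w t) (hW : HasSum w g)
    (ha : ∀ n, a n = c + ∑ p ∈ antidiagonal n, w p.1 * a p.2) (hnn : ∀ n, 0 ≤ a n)
    (hL : Tendsto a atTop (𝓝 L)) : c + g * L ≤ L := by
  have hpartial : ∀ M, c + (∑ t ∈ range M, w t) * L ≤ L := by
    intro M
    have hle : ∀ n ≥ M, c + ∑ t ∈ range M, w t * a (n - t) ≤ a n := by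
      intro n hn
      rw [ha n, Nat.sum_antidiagonal_eq_sum_range_succ (fun i j => w i * a j)]
      exact add_le_add le_rfl (sum_le_sum_of_subset_of_nonneg (range_subset_range.2 (by omega))
        fun t _ _ => mul_nonneg (hw t) (hnn _))
    have hlim : Tendsto (fun n => c + ∑ t ∈ range M, w t * a (n - t)) atTop
        (𝓝 (c + ∑ t ∈ range M, w t * L)) :=
      tendsto_const_nhds.add
        (tendsto_finsetSum _ fun t _ => (hL.comp (tendsto_sub_atTop_nat t)).const_mul _)
    rw [sum_mul]
    exact le_of_tendsto_of_tendsto hlim hL (eventually_atTop.2 ⟨M, hle⟩)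
  exact le_of_tendsto ((hW.tendsto_sum_nat.mul_const L).const_add c) (Eventually.of_forall hpartial)

theorem tendsto_of_renewal_of_nonneg (hw : ∀ t, 0 ≤ w t) (hW : HasSum w g) (hg : g < 1)
    (hc : 0 ≤ c) (ha : ∀ n, a n = c + ∑ p ∈ antidiagonal n, w p.1 * a p.2) :
    Tendsto a atTop (𝓝 (c / (1 - g))) := by
  have hw0 : w 0 < 1 := (le_hasSum hW 0 fun j _ => hw j).trans_lt hg
  have hbound := le_div_of_renewal hw hW hg hc ha
  obtain ⟨L, hL⟩ : ∃ L, Tendsto a atTop (𝓝 L) :=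
    ⟨_, tendsto_atTop_ciSup (monotone_of_renewal hw hw0 hc ha)
      ⟨_, Set.forall_mem_range.2 hbound⟩⟩
  have hupper : L ≤ c / (1 - g) := le_of_tendsto' hL hbound
  have hlower : c + g * L ≤ L := add_mul_le_of_renewal hw hW ha
    (nonneg_of_renewal (b := fun _ => c) hw hw0 (fun _ => hc) ha) hL
  have hLeq : L = c / (1 - g) := by
    refine le_antisymm hupper ?_
    rw [div_le_iff₀ (sub_pos.2 hg)]
    linarith
  rwa [← hLeq]

theorem tendsto_of_renewal (hw : ∀ t, 0 ≤ w t) (hW : HasSum w g) (hg : g < 1)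
    (ha : ∀ n, a n = c + ∑ p ∈ antidiagonal n, w p.1 * a p.2) :
    Tendsto a atTop (𝓝 (c / (1 - g))) := by
  rcases le_total 0 c with hc | hc
  · exact tendsto_of_renewal_of_nonneg hw hW hg hc ha
  · have hneg : ∀ n, -a n = -c + ∑ p ∈ antidiagonal n, w p.1 * -a p.2 := fun n => by
      rw [ha n]
      simp only [mul_neg, sum_neg_distrib, neg_add]
    simpa [neg_div] using (tendsto_of_renewal_of_nonneg hw hW hg (neg_nonneg.2 hc) hneg).neg

end Renewal

section TailProb

variable {pi Q : ℕ → ℝ}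

def tailProb (pi : ℕ → ℝ) (t : ℕ) : ℝ := 1 - ∑ j ∈ range (t + 1), pi j

theorem tailProb_zero : tailProb pi 0 = 1 - pi 0 := by
  simp [tailProb]

theorem tailProb_succ (t : ℕ) : tailProb pi (t + 1) = tailProb pi t - pi (t + 1) := by
  rw [tailProb, tailProb, sum_range_succ _ (t + 1)]
  ring

theorem tailProb_nonneg (hpos : ∀ j, 0 ≤ pi j) (hsum : HasSum pi 1) (t : ℕ) :
    0 ≤ tailProb pi t :=
  sub_nonneg.2 (sum_le_hasSum _ (fun j _ => hpos j) hsum)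

theorem sum_range_tailProb (n : ℕ) :
    ∑ t ∈ range n, tailProb pi t =
      ∑ j ∈ range n, (j : ℝ) * pi j + n * (1 - ∑ j ∈ range n, pi j) := by
  induction n with
  | zero => simp
  | succ n ih =>
    rw [sum_range_succ, ih, tailProb, sum_range_succ (fun j => (j : ℝ) * pi j),
      sum_range_succ pi]
    push_cast
    ring

theorem natCast_mul_one_sub_sum_range_le (hpos : ∀ j, 0 ≤ pi j) (hsum : HasSum pi 1)
    (hmom : Summable fun j : ℕ => (j : ℝ) * pi j) (n : ℕ) :
    n * (1 - ∑ j ∈ range n, pi j) ≤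
      ∑' j : ℕ, (j : ℝ) * pi j - ∑ j ∈ range n, (j : ℝ) * pi j := by
  rw [← hsum.tsum_eq, ← hsum.summable.sum_add_tsum_nat_add n, ← hmom.sum_add_tsum_nat_add n,
    add_sub_cancel_left, add_sub_cancel_left, ← tsum_mul_left]
  refine Summable.tsum_le_tsum (fun j => ?_)
    (((summable_nat_add_iff n).2 hsum.summable).mul_left _) ((summable_nat_add_iff n).2 hmom)
  gcongr
  · exact hpos _
  · simp

theorem hasSum_tailProb (hpos : ∀ j, 0 ≤ pi j) (hsum : HasSum pi 1)
    (hmom : Summable fun j : ℕ => (j : ℝ) * pi j) :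
    HasSum (tailProb pi) (∑' j : ℕ, (j : ℝ) * pi j) := by
  refine (hasSum_iff_tendsto_nat_of_nonneg (tailProb_nonneg hpos hsum) _).2
    (tendsto_of_tendsto_of_tendsto_of_le_of_le hmom.hasSum.tendsto_sum_nat tendsto_const_nhds
      (fun n => ?_) (fun n => ?_))
  · rw [sum_range_tailProb]
    exact le_add_of_nonneg_right
      (mul_nonneg n.cast_nonneg (sub_nonneg.2 (sum_le_hasSum _ (fun j _ => hpos j) hsum)))
  · rw [sum_range_tailProb]
    linarith [natCast_mul_one_sub_sum_range_le hpos hsum hmom n]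

theorem renewal_of_recurrence (hrec : ∀ k, Q k = ∑ j ∈ range (k + 1), pi j * Q (k - j + 1))
    (n : ℕ) : Q (n + 1) = Q 0 + ∑ p ∈ antidiagonal n, tailProb pi p.1 * Q (p.2 + 1) := by
  have hconv : ∀ k, Q k = ∑ p ∈ antidiagonal k, pi p.1 * Q (p.2 + 1) := fun k => by
    rw [Nat.sum_antidiagonal_eq_sum_range_succ (fun i j => pi i * Q (j + 1))]
    exact hrec k
  induction n with
  | zero =>
    have h0 := hconv 0
    simp only [Nat.antidiagonal_zero, sum_singleton, tailProb_zero] at h0 ⊢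
    linarith
  | succ n ih =>
    have hn := hconv (n + 1)
    rw [Nat.sum_antidiagonal_succ] at hn ⊢
    simp only [tailProb_succ, tailProb_zero, sub_mul, sum_sub_distrib]
    linarith

end TailProb

theorem stmt_1_general (pi Q : ℕ → ℝ)
    (hpos : ∀ j, 0 ≤ pi j) (hsum : HasSum pi 1)
    (hmom : Summable (fun j : ℕ => (j : ℝ) * pi j))
    (hγ1 : (∑' j : ℕ, (j : ℝ) * pi j) < 1)
    (hrec : ∀ k, Q k = ∑ j ∈ Finset.range (k + 1), pi j * Q (k - j + 1)) :
    Tendsto Q atTop (nhds (Q 0 / (1 - ∑' j : ℕ, (j : ℝ) * pi j))) :=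
  (tendsto_add_atTop_iff_nat 1).1 <|
    tendsto_of_renewal (tailProb_nonneg hpos hsum) (hasSum_tailProb hpos hsum hmom) hγ1
      (renewal_of_recurrence hrec)

/-- Takács' theorem, subcritical case: if the mean `γ₁ = ∑ j·π_j < 1`, then
`Q_k → Q₀ / (1 - γ₁)`. -/
theorem stmt_1 (pi Q : ℕ → ℝ)
    (hpos : ∀ j, 0 ≤ pi j) (hpi0 : 0 < pi 0) (hsum : HasSum pi 1)
    (hmom : Summable (fun j : ℕ => (j : ℝ) * pi j))
    (hγ1 : (∑' j : ℕ, (j : ℝ) * pi j) < 1)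
    (hQ0 : 0 < Q 0)
    (hrec : ∀ k, Q k = ∑ j ∈ Finset.range (k + 1), pi j * Q (k - j + 1)) :
    Tendsto Q atTop (nhds (Q 0 / (1 - ∑' j : ℕ, (j : ℝ) * pi j))) :=
  stmt_1_general pi Q hpos hsum hmom hγ1 hrec
end

section
/- Let $\{\pi_j\}_{j\ge 0}$ be a probability distribution with $\pi_0>0$, mean $\gamma_1=1$, and finite second factorial moment $\gamma_2=\sum_j j(j-1)\pi_j < \infty$. Let $\{Q_k\}$ satisfy $Q_0>0$ and $Q_k=\sum_{j=0}^k \pi_j Q_{k-j+1}$. Then $\lim_{k\to\infty} Q_k/k = 2Q_0/\gamma_2$. -/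
/-!
Put `r n = ∑_{i > n} π i` and `T n = ∑_{i > n} r i`, so that `∑ r = γ₁ = 1`, `∑ T = γ₂ / 2` and
`T 0 = π 0`. For the generating function `P` of `π` one has `P(z) - z = (1 - z)² T(z)`, and the
recurrence says `z Q(z) = P(z) (Q(z) - Q₀)`. Hence `(1 - z) Q(z) T(z) = Q₀ P(z) / (1 - z)`: the
increments `d` of `Q` satisfy `∑_{m ≤ n} d m T (n - m) = Q₀ (π 0 + ⋯ + π n)`. The recurrence also
makes `Q` increasing, so `d ≥ 0`, and the identity at `m = n` bounds `d` by `Q₀ / π 0`. Summing the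
identity over `n` and comparing with `∑ T` gives `(γ₂ / 2) Q N = Q₀ (N + o(N))` by Cesàro means.
-/

open Filter Finset PowerSeries Topology

section PowerSeries

variable {R : Type*}

theorem PowerSeries.coeff_mul_eq_sum_range [Semiring R] (φ ψ : R⟦X⟧) (n : ℕ) :
    coeff n (φ * ψ) = ∑ m ∈ range (n + 1), coeff m φ * coeff (n - m) ψ := by
  rw [coeff_mul, Nat.sum_antidiagonal_eq_sum_range_succ fun i j => coeff i φ * coeff j ψ]

theorem PowerSeries.mk_mul_mk [Semiring R] (a b : ℕ → R) :
    mk a * mk b = mk fun n => ∑ m ∈ range (n + 1), a m * b (n - m) := by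
  ext n
  simp [coeff_mul_eq_sum_range]

theorem PowerSeries.coeff_mul_mk_one [Semiring R] (φ : R⟦X⟧) (n : ℕ) :
    coeff n (φ * mk 1) = ∑ m ∈ range (n + 1), coeff m φ := by
  simp [coeff_mul_eq_sum_range]

theorem PowerSeries.sum_range_coeff_one_sub_X_mul [CommRing R] (φ : R⟦X⟧) (n : ℕ) :
    ∑ m ∈ range (n + 1), coeff m ((1 - X) * φ) = coeff n φ := by
  rw [← coeff_mul_mk_one, mul_comm, ← mul_assoc, mk_one_mul_one_sub_eq_one, one_mul]

theorem PowerSeries.coeff_one_sub_X_mul_mk_nonneg [CommRing R] [PartialOrder R]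
    [IsOrderedAddMonoid R] {f : ℕ → R} (hf : Monotone f) (hf0 : 0 ≤ f 0) (n : ℕ) :
    0 ≤ coeff n ((1 - X) * mk f) := by
  cases n with
  | zero => simpa using hf0
  | succ n => simpa [sub_mul, coeff_succ_X_mul] using hf n.le_succ

theorem sum_mul_sum_range_sub_eq_sum_convolution [CommSemiring R] (a b : ℕ → R) (N : ℕ) :
    ∑ m ∈ range (N + 1), a m * ∑ k ∈ range (N - m + 1), b k =
      ∑ n ∈ range (N + 1), ∑ m ∈ range (n + 1), a m * b (n - m) := by
  have h := congrArg (coeff N) (mul_assoc (mk a : R⟦X⟧) (mk b) (mk 1))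
  simp only [mk_mul_mk, coeff_mk, Pi.one_apply, mul_one] at h
  exact h.symm

theorem PowerSeries.one_sub_X_mul_mul_eq [CommRing R] {P S T Q : R⟦X⟧} {q : R}
    (hS : (1 - X) * S = 1 - P) (hT : (1 - X) * T = 1 - S) (hQ : X * Q = P * (Q - C q)) :
    (1 - X) * Q * T = C q * P * mk 1 := by
  -- `(1 - X) ^ 2 * T = P - X` and `(P - X) * Q = C q * P`
  linear_combination (mk 1 * (1 - X) * Q) * hT - (mk 1 * Q) * hS - mk 1 * hQ -
    ((1 - X) * Q * T) * mk_one_mul_one_sub_eq_one R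

end PowerSeries

noncomputable def tailSum (f : ℕ → ℝ) (n : ℕ) : ℝ := ∑' i, f (i + (n + 1))

section TailSum

variable {f : ℕ → ℝ} {a : ℝ}

theorem tailSum_nonneg (hf : ∀ n, 0 ≤ f n) (n : ℕ) : 0 ≤ tailSum f n :=
  tsum_nonneg fun _ => hf _

theorem tailSum_zero (hf : HasSum f a) : tailSum f 0 = a - f 0 := by
  rw [tailSum, ← hf.tsum_eq, hf.summable.tsum_eq_zero_add]
  ring

theorem tailSum_succ (hf : Summable f) (n : ℕ) : tailSum f (n + 1) = tailSum f n - f (n + 1) := by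
  rw [tailSum, tailSum, ((summable_nat_add_iff (n + 1)).2 hf).tsum_eq_zero_add]
  simp only [zero_add, add_sub_cancel_left]
  exact tsum_congr fun i => congrArg f (by omega)

theorem PowerSeries.one_sub_X_mul_mk_tailSum (hf : HasSum f a) :
    (1 - X) * mk (tailSum f) = C a - mk f := by
  ext n
  cases n with
  | zero => simp [tailSum_zero hf]
  | succ n => simp [sub_mul, coeff_succ_X_mul, tailSum_succ hf.summable]

theorem hasSum_mul_tailSum {w : ℕ → ℝ} (hf : ∀ n, 0 ≤ f n) (hfs : Summable f)
    (hw : ∀ k, 0 ≤ w k) (h : HasSum (fun n => (∑ k ∈ range n, w k) * f n) a) :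
    HasSum (fun k => w k * tailSum f k) a := by
  set g : ℕ × ℕ → ℝ := fun p => if p.1 < p.2 then w p.1 * f p.2 else 0
  have hg : 0 ≤ g := fun _ => ite_nonneg (mul_nonneg (hw _) (hf _)) le_rfl
  have hcol : ∀ n, HasSum (fun k => g (k, n)) ((∑ k ∈ range n, w k) * f n) := fun n => by
    have h0 : HasSum (fun k => g (k, n)) (∑ k ∈ range n, g (k, n)) :=
      hasSum_sum_of_ne_finset_zero fun k hk => if_neg (by simpa using hk)
    rwa [sum_congr rfl fun k hk => (show g (k, n) = w k * f n from if_pos (mem_range.1 hk)),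
      ← sum_mul] at h0
  have hrow : ∀ k, HasSum (fun n => g (k, n)) (w k * tailSum f k) := fun k => by
    have h0 : ∑ i ∈ range (k + 1), g (k, i) = 0 :=
      sum_eq_zero fun i hi => if_neg (by simp at hi; omega)
    rw [← hasSum_nat_add_iff' (k + 1), h0, sub_zero]
    have e : (fun i => g (k, i + (k + 1))) = fun i => w k * f (i + (k + 1)) :=
      funext fun i => if_pos (by omega)
    rw [e]
    exact ((summable_nat_add_iff (k + 1)).2 hfs).hasSum.mul_left (w k)
  have hswap : Summable fun p : ℕ × ℕ => g p.swap :=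
    (summable_prod_of_nonneg fun p => hg p.swap).2
      ⟨fun n => (hcol n).summable,
        by simpa only [Prod.swap_prod_mk, (hcol _).tsum_eq] using h.summable⟩
  have hga : HasSum g a := by
    rw [← (Equiv.prodComm ℕ ℕ).hasSum_iff, h.unique (hswap.hasSum.prod_fiberwise hcol)]
    exact hswap.hasSum
  exact hga.prod_fiberwise hrow

theorem hasSum_tailSum (hf : ∀ n, 0 ≤ f n) (hfs : Summable f)
    (h : HasSum (fun n : ℕ => (n : ℝ) * f n) a) : HasSum (tailSum f) a := by
  simpa using hasSum_mul_tailSum hf hfs (fun _ => zero_le_one) (by simpa using h)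

theorem hasSum_natCast_mul_tailSum (hf : ∀ n, 0 ≤ f n) (hfs : Summable f)
    (h : HasSum (fun n : ℕ => (n : ℝ) * (n - 1) * f n) a) :
    HasSum (fun n : ℕ => (n : ℝ) * tailSum f n) (a / 2) := by
  have gauss : ∀ n : ℕ, ∑ k ∈ range n, (k : ℝ) = n * (n - 1) / 2 := fun n => by
    induction n with
    | zero => simp
    | succ n ih => rw [sum_range_succ, ih]; push_cast; ring
  refine hasSum_mul_tailSum hf hfs (fun k => k.cast_nonneg) ?_
  simpa only [gauss, div_mul_eq_mul_div] using h.div_const 2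

end TailSum

theorem tendsto_sum_range_succ_div {u : ℕ → ℝ} {l : ℝ} (h : Tendsto u atTop (𝓝 l)) :
    Tendsto (fun N : ℕ => (∑ n ∈ range (N + 1), u n) / N) atTop (𝓝 l) := by
  have h' := h.cesaro.add (h.div_atTop tendsto_natCast_atTop_atTop)
  rw [add_zero] at h'
  refine h'.congr fun N => ?_
  rw [sum_range_succ, add_div, inv_mul_eq_div]

theorem tendsto_sum_mul_sub_div_of_tendsto_zero {a b : ℕ → ℝ} {C : ℝ} (ha : ∀ n, 0 ≤ a n)
    (haC : ∀ n, a n ≤ C) (hb : ∀ n, 0 ≤ b n) (hb0 : Tendsto b atTop (𝓝 0)) :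
    Tendsto (fun N : ℕ => (∑ m ∈ range (N + 1), a m * b (N - m)) / N) atTop (𝓝 0) := by
  have hbound : ∀ N, ∑ m ∈ range (N + 1), a m * b (N - m) ≤ C * ∑ n ∈ range (N + 1), b n :=
    fun N => calc
      ∑ m ∈ range (N + 1), a m * b (N - m) ≤ ∑ m ∈ range (N + 1), C * b (N - m) :=
        sum_le_sum fun m _ => mul_le_mul_of_nonneg_right (haC m) (hb _)
      _ = C * ∑ n ∈ range (N + 1), b n := by
        rw [← mul_sum, ← sum_range_reflect b]
        simp
  have hupper := (tendsto_sum_range_succ_div hb0).const_mul C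
  rw [mul_zero] at hupper
  refine tendsto_of_tendsto_of_tendsto_of_le_of_le tendsto_const_nhds hupper
    (fun N => div_nonneg (sum_nonneg fun m _ => mul_nonneg (ha m) (hb _)) N.cast_nonneg)
    fun N => ?_
  rw [← mul_div_assoc]
  exact div_le_div_of_nonneg_right (hbound N) N.cast_nonneg

theorem tendsto_sum_range_succ_div_of_convolution {d T p : ℕ → ℝ} {μ l : ℝ}
    (hd : ∀ n, 0 ≤ d n) (hT : ∀ n, 0 ≤ T n) (hT0 : 0 < T 0) (hTμ : HasSum T μ)
    (hconv : ∀ n, ∑ m ∈ range (n + 1), d m * T (n - m) = p n)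
    (hp : Tendsto p atTop (𝓝 l)) :
    Tendsto (fun N : ℕ => (∑ m ∈ range (N + 1), d m) / N) atTop (𝓝 (l / μ)) := by
  have hμ : 0 < μ := hT0.trans_le (le_hasSum hTμ 0 fun j _ => hT j)
  obtain ⟨B, hB⟩ := hp.bddAbove_range
  have hdB : ∀ n, d n ≤ B / T 0 := fun n => by
    rw [le_div_iff₀ hT0]
    calc d n * T 0 = d n * T (n - n) := by rw [Nat.sub_self]
      _ ≤ ∑ m ∈ range (n + 1), d m * T (n - m) :=
        single_le_sum (fun m _ => mul_nonneg (hd m) (hT _)) (self_mem_range_succ n)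
      _ = p n := hconv n
      _ ≤ B := hB (Set.mem_range_self n)
  set τ : ℕ → ℝ := fun n => μ - ∑ k ∈ range (n + 1), T k
  have hτ : ∀ n, 0 ≤ τ n := fun n => sub_nonneg.2 (sum_le_hasSum _ (fun i _ => hT i) hTμ)
  have hτ0 : Tendsto τ atTop (𝓝 0) := by
    have h := (tendsto_const_nhds (x := μ)).sub
      (hTμ.tendsto_sum_nat.comp (tendsto_add_atTop_nat 1))
    rwa [sub_self] at h
  have hsplit : ∀ N, μ * ∑ m ∈ range (N + 1), d m =
      ∑ n ∈ range (N + 1), p n + ∑ m ∈ range (N + 1), d m * τ (N - m) := fun N => by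
    have hσ := sum_mul_sum_range_sub_eq_sum_convolution d T N
    simp only [hconv] at hσ
    simp only [τ, mul_sub, sum_sub_distrib, hσ, ← sum_mul]
    ring
  have h := ((tendsto_sum_range_succ_div hp).add
    (tendsto_sum_mul_sub_div_of_tendsto_zero hd hdB hτ hτ0)).div_const μ
  rw [add_zero] at h
  refine h.congr fun N => ?_
  rw [← add_div, ← hsplit, mul_div_assoc, mul_div_cancel_left₀ _ hμ.ne']

section Recurrence

variable {p Q : ℕ → ℝ}

theorem monotone_of_convolution_rec (hp : ∀ j, 0 ≤ p j) (hp0 : 0 < p 0)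
    (hle : ∀ n, ∑ j ∈ range n, p j ≤ 1) (hQ0 : 0 ≤ Q 0)
    (hrec : ∀ k, Q k = ∑ j ∈ range (k + 1), p j * Q (k - j + 1)) : Monotone Q := by
  have step : ∀ n, (∀ m ≤ n, Q m ≤ Q n) → Q n ≤ Q (n + 1) := fun n hn => by
    have hsplit : Q n = ∑ j ∈ range n, p (j + 1) * Q (n - (j + 1) + 1) + p 0 * Q (n + 1) := by
      rw [hrec n, sum_range_succ', Nat.sub_zero]
    have htail : ∑ j ∈ range n, p (j + 1) ≤ 1 - p 0 := by
      have := hle (n + 1)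
      rw [sum_range_succ'] at this
      linarith
    have hS : ∑ j ∈ range n, p (j + 1) * Q (n - (j + 1) + 1) ≤ (1 - p 0) * Q n := calc
      _ ≤ ∑ j ∈ range n, p (j + 1) * Q n :=
        sum_le_sum fun j hj => mul_le_mul_of_nonneg_left (hn _ (by simp at hj; omega)) (hp _)
      _ = (∑ j ∈ range n, p (j + 1)) * Q n := (sum_mul ..).symm
      _ ≤ (1 - p 0) * Q n := mul_le_mul_of_nonneg_right htail (hQ0.trans (hn 0 n.zero_le))
    exact le_of_mul_le_mul_left (by linarith) hp0
  have hmono : ∀ n, ∀ m ≤ n, Q m ≤ Q n := fun n => by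
    induction n with
    | zero => intro m hm; rw [Nat.le_zero.1 hm]
    | succ n ih =>
      intro m hm
      rcases Nat.le_succ_iff.1 hm with hm | rfl
      · exact (ih m hm).trans (step n ih)
      · exact le_rfl
  exact monotone_nat_of_le_succ fun n => step n (hmono n)

theorem PowerSeries.X_mul_mk_eq_of_convolution_rec
    (hrec : ∀ k, Q k = ∑ j ∈ range (k + 1), p j * Q (k - j + 1)) :
    X * mk Q = mk p * (mk Q - C (Q 0)) := by
  have hshift : mk Q - C (Q 0) = X * mk fun n => Q (n + 1) := by
    simpa using sub_const_eq_X_mul_shift (mk Q)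
  have hconv : mk Q = mk p * mk fun n => Q (n + 1) := by
    rw [mk_mul_mk]
    exact congrArg mk (funext hrec)
  rw [hshift, mul_left_comm, ← hconv]

theorem PowerSeries.sum_coeff_one_sub_X_mul_mk_mul_tailSum_tailSum (hp : HasSum p 1)
    (hr : HasSum (tailSum p) 1) (hrec : ∀ k, Q k = ∑ j ∈ range (k + 1), p j * Q (k - j + 1))
    (n : ℕ) :
    ∑ m ∈ range (n + 1), coeff m ((1 - X) * mk Q) * tailSum (tailSum p) (n - m) =
      Q 0 * ∑ j ∈ range (n + 1), p j := by
  have h := congrArg (coeff n) (one_sub_X_mul_mul_eq (S := mk (tailSum p))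
    (by rw [one_sub_X_mul_mk_tailSum hp, map_one]) (by rw [one_sub_X_mul_mk_tailSum hr, map_one])
    (X_mul_mk_eq_of_convolution_rec hrec))
  rw [coeff_mul_eq_sum_range, mul_assoc, coeff_C_mul, coeff_mul_mk_one] at h
  simpa only [coeff_mk] using h

end Recurrence

/-- Takács' theorem, critical case: if `γ₁ = 1` and `γ₂ = ∑ j(j-1)π_j < ∞`,
then `Q_k / k → 2Q₀ / γ₂`. -/
theorem stmt_2 (pi Q : ℕ → ℝ)
    (hpos : ∀ j, 0 ≤ pi j) (hpi0 : 0 < pi 0) (hsum : HasSum pi 1)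
    (hγ1 : (∑' j : ℕ, (j : ℝ) * pi j) = 1)
    (hγ2 : Summable (fun j : ℕ => (j : ℝ) * ((j : ℝ) - 1) * pi j))
    (hQ0 : 0 < Q 0)
    (hrec : ∀ k, Q k = ∑ j ∈ Finset.range (k + 1), pi j * Q (k - j + 1)) :
    Tendsto (fun k : ℕ => Q k / (k : ℝ)) atTop
      (nhds (2 * Q 0 / ∑' j : ℕ, (j : ℝ) * ((j : ℝ) - 1) * pi j)) := by
  have hmean : HasSum (fun j : ℕ => (j : ℝ) * pi j) 1 := by
    refine (Summable.hasSum_iff ?_).2 hγ1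
    by_contra h
    rw [tsum_eq_zero_of_not_summable h] at hγ1
    exact zero_ne_one hγ1
  have hr : HasSum (tailSum pi) 1 := hasSum_tailSum hpos hsum.summable hmean
  have hT := hasSum_tailSum (tailSum_nonneg hpos) hr.summable
    (hasSum_natCast_mul_tailSum hpos hsum.summable hγ2.hasSum)
  have hT0 : tailSum (tailSum pi) 0 = pi 0 := by
    rw [tailSum_zero hr, tailSum_zero hsum]
    ring
  have hQ : Monotone Q := monotone_of_convolution_rec hpos hpi0
    (fun n => sum_le_hasSum _ (fun j _ => hpos j) hsum) hQ0.le hrec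
  have hlim := tendsto_sum_range_succ_div_of_convolution
    (coeff_one_sub_X_mul_mk_nonneg hQ hQ0.le) (tailSum_nonneg (tailSum_nonneg hpos))
    (hT0 ▸ hpi0) hT (sum_coeff_one_sub_X_mul_mk_mul_tailSum_tailSum hsum hr hrec)
    ((hsum.tendsto_sum_nat.comp (tendsto_add_atTop_nat 1)).const_mul (Q 0))
  simp only [sum_range_coeff_one_sub_X_mul, coeff_mk] at hlim
  convert hlim using 2
  field_simp
end
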